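/- Let ε = ±1 and let ∇ be the Type B connection with C₁₂¹ = 0, C₂₂¹ = ε, C₂₂² = 2εC₁₁², and suppose C₁₁¹ − C₁₂² − 1 ≠ 0. Set μ = (−(C₁₁¹)² + 2C₁₁¹C₁₂² + 2ε(C₁₁²)² − (C₁₂²)² + 2C₁₂² + 1)/(C₁₁¹ − C₁₂² − 1)² and α = μ(1 + C₁₂² − C₁₁¹). Then f(x¹,x²) = (x¹)^α satisfies the affine quasi-Einstein equation H(f) = μ f ρ_s. -/

import Mathlib

open Real

/-- Partial derivative ∂_i on ℝ². -/
noncomputable def pd (i : Fin 2) (f : ℝ × ℝ → ℝ) : ℝ × ℝ → ℝ :=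
  fun p => if i = 0 then deriv (fun t => f (t, p.2)) p.1
           else deriv (fun t => f (p.1, t)) p.2

/-- Affine Hessian H(f)_{ij} = ∂_i∂_j f − Σ_k Γ_{ij}^k ∂_k f. -/
noncomputable def Hess (Γ : Fin 2 → Fin 2 → Fin 2 → (ℝ × ℝ → ℝ))
    (f : ℝ × ℝ → ℝ) (i j : Fin 2) : ℝ × ℝ → ℝ :=
  fun p => pd i (pd j f) p - ∑ k, Γ i j k p * pd k f p

/-- Ricci tensor ρ_{jk} = ∂_i Γ_{jk}^i − ∂_j Γ_{ik}^i + Γ_{il}^i Γ_{jk}^l − Γ_{jl}^i Γ_{ik}^l. -/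
noncomputable def Ric (Γ : Fin 2 → Fin 2 → Fin 2 → (ℝ × ℝ → ℝ)) (j k : Fin 2) :
    ℝ × ℝ → ℝ :=
  fun p => (∑ i, pd i (Γ j k i) p) - (∑ i, pd j (Γ i k i) p)
    + (∑ i, ∑ l, Γ i l i p * Γ j k l p) - (∑ i, ∑ l, Γ j l i p * Γ i k l p)

/-- Symmetrized Ricci tensor. -/
noncomputable def RicS (Γ : Fin 2 → Fin 2 → Fin 2 → (ℝ × ℝ → ℝ)) (i j : Fin 2) :
    ℝ × ℝ → ℝ :=
  fun p => (Ric Γ i j p + Ric Γ j i p) / 2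

/-- Covariant derivative of the Ricci tensor: (∇ρ)(i,j;k). -/
noncomputable def nabRic (Γ : Fin 2 → Fin 2 → Fin 2 → (ℝ × ℝ → ℝ)) (i j k : Fin 2) :
    ℝ × ℝ → ℝ :=
  fun p => pd k (Ric Γ i j) p - ∑ l, Γ k i l p * Ric Γ l j p
    - ∑ l, Γ k j l p * Ric Γ i l p

/-- Type B Christoffel symbols Γ_{ij}^k = C_{ij}^k / x¹. -/
noncomputable def ΓB (C : Fin 2 → Fin 2 → Fin 2 → ℝ) :
    Fin 2 → Fin 2 → Fin 2 → (ℝ × ℝ → ℝ) :=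
  fun i j k p => C i j k / p.1


/-!
For a Type B connection both sides of the equation are homogeneous in x¹: the Ricci tensor is
`ricB C / (x¹)²` with a constant matrix `ricB C`, and `H((x¹)^α) = (x¹)^(α-2)` times a constant
matrix. The quasi-Einstein equation for `(x¹)^α` is therefore a system of algebraic equations in
`α`, `μ` and `C`. Under the constraints on `C`, `ρ_s` is diagonal with
`ρ₂₂ = ε d / (x¹)²`, `d = C₁₁¹ - C₁₂² - 1`, so the (2,2)-equation is exactly `α = -μ d`. Substituting
this, the (1,1)-equation becomes `μ (μ d² - n) = 0` with `n` the numerator of `μ`, which holds by the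
choice of `μ` (when `d = 0` because then `μ = 0`).
-/

lemma pd_zero_comp_fst (g : ℝ → ℝ) :
    pd 0 (fun q : ℝ × ℝ => g q.1) = fun q => deriv g q.1 := rfl

lemma pd_one_comp_fst (g : ℝ → ℝ) :
    pd 1 (fun q : ℝ × ℝ => g q.1) = 0 := by
  ext p
  simp [pd]

lemma Hess_comp_fst (Γ : Fin 2 → Fin 2 → Fin 2 → (ℝ × ℝ → ℝ)) (g : ℝ → ℝ) (i j : Fin 2)
    (p : ℝ × ℝ) :
    Hess Γ (fun q => g q.1) i j p
      = (if i = 0 ∧ j = 0 then deriv (deriv g) p.1 else 0) - Γ i j 0 p * deriv g p.1 := by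
  have hconst : ∀ k, pd k (0 : ℝ × ℝ → ℝ) = 0 := by
    intro k; ext p; fin_cases k <;> simp [pd]
  fin_cases i <;> fin_cases j <;>
    simp [Hess, Fin.sum_univ_two, pd_zero_comp_fst, pd_one_comp_fst, hconst]

lemma deriv_deriv_rpow_const (α x : ℝ) :
    deriv (deriv fun x : ℝ => x ^ α) x = α * (α - 1) * x ^ (α - 2) := by
  simpa [Function.iterate_succ, descPochhammer_succ_right, one_add_one_eq_two]
    using Real.iter_deriv_rpow_const α x 2

lemma pd_ΓB (C : Fin 2 → Fin 2 → Fin 2 → ℝ) (i j k l : Fin 2) (p : ℝ × ℝ) :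
    pd l (ΓB C i j k) p = -(if l = 0 then C i j k else 0) / p.1 ^ 2 := by
  fin_cases l
  · simp [pd, ΓB, div_eq_mul_inv, deriv_const_mul_field']
  · simp [pd, ΓB]

def ricB (C : Fin 2 → Fin 2 → Fin 2 → ℝ) (j k : Fin 2) : ℝ :=
  -C j k 0 + (if j = 0 then ∑ i, C i k i else 0)
    + ∑ i, ∑ l, (C i l i * C j k l - C j l i * C i k l)

lemma Ric_ΓB (C : Fin 2 → Fin 2 → Fin 2 → ℝ) (j k : Fin 2) (p : ℝ × ℝ) (hp : p.1 ≠ 0) :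
    Ric (ΓB C) j k p = ricB C j k / p.1 ^ 2 := by
  simp only [Ric, ricB, pd_ΓB, ΓB, Fin.sum_univ_two]
  fin_cases j <;> simp <;> field_simp <;> ring

lemma Hess_ΓB_rpow (C : Fin 2 → Fin 2 → Fin 2 → ℝ) (α : ℝ) (i j : Fin 2) (p : ℝ × ℝ)
    (hp : 0 < p.1) :
    Hess (ΓB C) (fun q => q.1 ^ α) i j p
      = ((if i = 0 ∧ j = 0 then α * (α - 1) else 0) - α * C i j 0) * p.1 ^ α / p.1 ^ 2 := by
  rw [Hess_comp_fst (ΓB C) (· ^ α), deriv_deriv_rpow_const, Real.deriv_rpow_const, ΓB,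
    Real.rpow_sub hp, Real.rpow_sub hp, Real.rpow_one, Real.rpow_two]
  split_ifs
  · field_simp
  · field_simp
    ring

theorem typeB_rpow_quasiEinstein_of_coeff (C : Fin 2 → Fin 2 → Fin 2 → ℝ) (μ α : ℝ)
    (h : ∀ i j : Fin 2, (if i = 0 ∧ j = 0 then α * (α - 1) else 0) - α * C i j 0
      = μ * (ricB C i j + ricB C j i) / 2) :
    ∀ i j : Fin 2, ∀ p : ℝ × ℝ, 0 < p.1 →
      Hess (ΓB C) (fun q => q.1 ^ α) i j p = μ * (p.1 ^ α) * RicS (ΓB C) i j p := by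
  intro i j p hp
  rw [Hess_ΓB_rpow C α i j p hp, RicS, Ric_ΓB C i j p hp.ne', Ric_ΓB C j i p hp.ne', h i j]
  ring

lemma mul_mul_sq_eq_of_eq_div {μ n d : ℝ} (h : μ = n / d ^ 2) : μ * (μ * d ^ 2) = μ * n := by
  rcases eq_or_ne d 0 with rfl | hd
  · simp [h]
  · rw [h]; field_simp

theorem typeB_quasiEinstein_general_mu_general
    (C : Fin 2 → Fin 2 → Fin 2 → ℝ)
    (hsym : ∀ i j k, C i j k = C j i k)
    (ε : ℝ)
    (h1 : C 0 1 0 = 0) (h2 : C 1 1 0 = ε)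
    (h3 : C 1 1 1 = 2 * ε * C 0 0 1)
    (μ α : ℝ)
    (hμ : μ = (-(C 0 0 0) ^ 2 + 2 * C 0 0 0 * C 0 1 1 + 2 * ε * (C 0 0 1) ^ 2
        - (C 0 1 1) ^ 2 + 2 * C 0 1 1 + 1) / (C 0 0 0 - C 0 1 1 - 1) ^ 2)
    (hα : α = μ * (1 + C 0 1 1 - C 0 0 0)) :
    ∀ i j : Fin 2, ∀ p : ℝ × ℝ, 0 < p.1 →
      Hess (ΓB C) (fun q => q.1 ^ α) i j p
        = μ * (p.1 ^ α) * RicS (ΓB C) i j p := by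
  have hμ' := mul_mul_sq_eq_of_eq_div hμ
  apply typeB_rpow_quasiEinstein_of_coeff
  intro i j
  fin_cases i <;> fin_cases j <;> simp only [ricB, Fin.sum_univ_two,
    Fin.isValue, Fin.zero_eta, Fin.mk_one, one_ne_zero, and_false, and_true, and_self,
    ↓reduceIte, hsym 1 0, h1, h2, h3, hα]
  · linear_combination hμ'
  all_goals ring

/-- Type B with C₁₂¹ = 0, C₂₂¹ = ε, C₂₂² = 2εC₁₁² and C₁₁¹ − C₁₂² − 1 ≠ 0:
f = (x¹)^α with the stated μ and α = μ(1 + C₁₂² − C₁₁¹) solves H(f) = μ f ρ_s. -/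
theorem typeB_quasiEinstein_general_mu
    (C : Fin 2 → Fin 2 → Fin 2 → ℝ)
    (hsym : ∀ i j k, C i j k = C j i k)
    (ε : ℝ) (hε : ε = 1 ∨ ε = -1)
    (h1 : C 0 1 0 = 0) (h2 : C 1 1 0 = ε)
    (h3 : C 1 1 1 = 2 * ε * C 0 0 1)
    (h4 : C 0 0 0 - C 0 1 1 - 1 ≠ 0)
    (μ α : ℝ)
    (hμ : μ = (-(C 0 0 0) ^ 2 + 2 * C 0 0 0 * C 0 1 1 + 2 * ε * (C 0 0 1) ^ 2
        - (C 0 1 1) ^ 2 + 2 * C 0 1 1 + 1) / (C 0 0 0 - C 0 1 1 - 1) ^ 2)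
    (hα : α = μ * (1 + C 0 1 1 - C 0 0 0)) :
    ∀ i j : Fin 2, ∀ p : ℝ × ℝ, 0 < p.1 →
      Hess (ΓB C) (fun q => q.1 ^ α) i j p
        = μ * (p.1 ^ α) * RicS (ΓB C) i j p :=
  typeB_quasiEinstein_general_mu_general C hsym ε h1 h2 h3 μ α hμ hα
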